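/- Let D be a strong balanced bipartite digraph with partite sets V1 and V2, each of cardinality a, where a ≥ 2. Suppose that for every dominating pair of vertices {x, y} of D, either d(x) ≥ 2a−2 and d(y) ≥ a+1, or d(y) ≥ 2a−2 and d(x) ≥ a+1, and suppose that D is not isomorphic to either variant of the digraph H2. Then D contains a perfect matching from V1 to V2 and a perfect matching from V2 to V1; moreover, D contains a cycle factor. -/

import Mathlib

/-- The degree of a vertex `x` in the digraph with arc relation `A`:
number of out-neighbours plus number of in-neighbours. -/
noncomputable def deg {V : Type*} (A : V → V → Prop) (x : V) : ℕ :=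
  Nat.card {y : V // A x y} + Nat.card {y : V // A y x}

/-- A digraph is strong if for every ordered pair of vertices there is a directed path. -/
def IsStrong {V : Type*} (A : V → V → Prop) : Prop :=
  ∀ x y : V, Relation.ReflTransGen A x y

/-- `{x, y}` is a dominating pair: `x ≠ y` and some vertex `z` is dominated by both. -/
def DominatingPair {V : Type*} (A : V → V → Prop) (x y : V) : Prop :=
  x ≠ y ∧ ∃ z, A x z ∧ A y z

/-- `{x, y}` is a dominated pair: `x ≠ y` and some vertex `z` dominates both. -/
def DominatedPair {V : Type*} (A : V → V → Prop) (x y : V) : Prop :=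
  x ≠ y ∧ ∃ z, A z x ∧ A z y

/-- `V1`, `V2` form a bipartition of the digraph `A`: every vertex lies in exactly
one of them and both are independent sets. -/
def IsBipartition {V : Type*} (A : V → V → Prop) (V1 V2 : Finset V) : Prop :=
  (∀ v : V, v ∈ V1 ∨ v ∈ V2) ∧ Disjoint V1 V2 ∧
  (∀ x ∈ V1, ∀ y ∈ V1, ¬ A x y) ∧ (∀ x ∈ V2, ∀ y ∈ V2, ¬ A x y)

/-- A digraph is hamiltonian iff there is a permutation `σ` of the vertices with an arc
from each vertex to its successor, and all vertices lie on one cycle of `σ`. -/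
def IsHamiltonian {V : Type*} (A : V → V → Prop) : Prop :=
  ∃ σ : Equiv.Perm V, (∀ v, A v (σ v)) ∧ ∀ v w : V, σ.SameCycle v w

/-- A digraph has a cycle factor iff there is a permutation `σ` of the vertices with an arc
from each vertex to its successor (the cycles of `σ` are then vertex-disjoint directed
cycles covering all vertices; there are no loops in a bipartite digraph, so no fixed points). -/
def HasCycleFactor {V : Type*} (A : V → V → Prop) : Prop :=
  ∃ σ : Equiv.Perm V, ∀ v, A v (σ v)

/-- A perfect matching from `S` to `T`: a choice, for each vertex of `S`, of an arc
to a vertex of `T`, no two arcs sharing a head. -/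
def IsPerfectMatchingFromTo {V : Type*} (A : V → V → Prop) (S T : Finset V) : Prop :=
  ∃ f : V → V, Set.InjOn f ↑S ∧ ∀ x ∈ S, f x ∈ T ∧ A x (f x)

/-- Isomorphism of digraphs. -/
def DigraphIso {V W : Type*} (A : V → V → Prop) (B : W → W → Prop) : Prop :=
  ∃ e : V ≃ W, ∀ x y : V, A x y ↔ B (e x) (e y)

/-- The digraph `H1`, with `x1 = 0`, `x2 = 1`, `y1 = 2`, `y2 = 3`.
Arcs: `x1 ↔ y1`, `x2 ↔ y1`, `x2 ↔ y2`. -/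
def H1Adj : Fin 4 → Fin 4 → Prop := fun i j =>
  (i, j) ∈ ([(0, 2), (2, 0), (1, 2), (2, 1), (1, 3), (3, 1)] : List (Fin 4 × Fin 4))

/-- The digraph `H2` (two variants, indexed by `b : Bool`), with `x1 = 0`, `x2 = 1`,
`x3 = 2`, `y1 = 3`, `y2 = 4`, `y3 = 5`. Arcs: the 2-cycles `x1 ↔ y1`, `x2 ↔ y1`,
`x3 ↔ y2`, `x3 ↔ y3`, the arcs `y2 → x1`, `y2 → x2`, `y3 → x1`, `y3 → x2`, `y1 → x3`,
and (iff `b = true`) the arc `x3 → y1`. -/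
def H2Adj (b : Bool) : Fin 6 → Fin 6 → Prop := fun i j =>
  (i, j) ∈ ([(0, 3), (3, 0), (1, 3), (3, 1), (2, 4), (4, 2), (2, 5), (5, 2),
             (4, 0), (4, 1), (5, 0), (5, 1), (3, 2)] : List (Fin 6 × Fin 6)) ∨
  (b = true ∧ (i, j) = (2, 3))

/-- The digraph `H3`, with `x1 = 0`, `x2 = 1`, `x3 = 2`, `y1 = 3`, `y2 = 4`, `y3 = 5`.
Arcs: the directed 4-cycle `x1 → y1 → x2 → y2 → x1`, and the 2-cycles
`x3 ↔ y1`, `x3 ↔ y2`, `y3 ↔ x1`, `y3 ↔ x2`. -/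
def H3Adj : Fin 6 → Fin 6 → Prop := fun i j =>
  (i, j) ∈ ([(0, 3), (3, 1), (1, 4), (4, 0),
             (2, 3), (3, 2), (2, 4), (4, 2),
             (5, 0), (0, 5), (5, 1), (1, 5)] : List (Fin 6 × Fin 6))

/-!
By Hall's theorem it suffices to show `|N⁺(S)| ≥ |S|` for every `S ⊆ V1`, and symmetrically for
`V2`; two perfect matchings in opposite directions combine into a permutation whose graph lies in
`A`, i.e. a cycle factor.

If `|N⁺(S)| < |S|`, two vertices of `S` share an out-neighbour, so the degree condition applies to
them. The one of degree at least `2a - 2` has at most `|N⁺(S)|` out-neighbours and at most `a`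
in-neighbours, which forces `|S| = a - 1`, `|N⁺(S)| = a - 2` and that all of `V2` dominates it.
The two vertices of `V2 \ N⁺(S)` then form a dominating pair whose in-neighbours all lie in the
single vertex `u` of `V1 \ S`; this forces `a = 3` and pins down every arc except `u → N⁺(S)`,
once strong connectivity supplies the arc `N⁺(S) → u`. What remains is one of the two variants
of `H2`.
-/

section

open Set

variable {V : Type*} {A : V → V → Prop}

def outNbhd (A : V → V → Prop) (S : Set V) : Set V := {y | ∃ x ∈ S, A x y}

theorem mem_outNbhd {S : Set V} {y : V} : y ∈ outNbhd A S ↔ ∃ x ∈ S, A x y := Iff.rfl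

theorem setOf_adj_subset_outNbhd {S : Set V} {x : V} (hx : x ∈ S) :
    {y | A x y} ⊆ outNbhd A S :=
  fun _ hy => ⟨x, hx, hy⟩

def DominatingPairDegreeCondition (A : V → V → Prop) (a : ℕ) : Prop :=
  ∀ x y, DominatingPair A x y →
    (2 * a - 2 ≤ deg A x ∧ a + 1 ≤ deg A y) ∨ (2 * a - 2 ≤ deg A y ∧ a + 1 ≤ deg A x)

theorem deg_eq_ncard (x : V) : deg A x = {y | A x y}.ncard + {y | A y x}.ncard := rfl

theorem exists_dominatingPair_of_ncard_lt {S T : Set V} (hout : ∀ v, ∃ w, A v w)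
    (hST : ∀ x ∈ S, ∀ y, A x y → y ∈ T) (hlt : T.ncard < S.ncard)
    (hT : T.Finite := by toFinite_tac) : ∃ x ∈ S, ∃ y ∈ S, DominatingPair A x y := by
  choose f hf using hout
  obtain ⟨x, hx, y, hy, hxy, hfxy⟩ :=
    exists_ne_map_eq_of_ncard_lt_of_maps_to hlt (fun x hx => hST x hx _ (hf x)) hT
  exact ⟨x, hx, y, hy, hxy, f x, hf x, hfxy ▸ hf y⟩

section Bipartition

variable {V1 V2 : Finset V} {x y : V}

theorem IsBipartition.symm (h : IsBipartition A V1 V2) : IsBipartition A V2 V1 :=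
  ⟨fun v => (h.1 v).symm, h.2.1.symm, h.2.2.2, h.2.2.1⟩

theorem IsBipartition.mem_right_of_adj (h : IsBipartition A V1 V2) (hx : x ∈ V1)
    (hxy : A x y) : y ∈ V2 :=
  (h.1 y).resolve_left fun hy => h.2.2.1 x hx y hy hxy

theorem IsBipartition.mem_left_of_adj (h : IsBipartition A V1 V2) (hy : y ∈ V1)
    (hxy : A x y) : x ∈ V2 :=
  (h.1 x).resolve_left fun hx => h.2.2.1 x hx y hy hxy

theorem IsBipartition.notMem_right (h : IsBipartition A V1 V2) (hx : x ∈ V1) : x ∉ V2 :=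
  Finset.disjoint_left.mp h.2.1 hx

theorem IsBipartition.setOf_adj_subset (h : IsBipartition A V1 V2) (hx : x ∈ V1) :
    {y | A x y} ⊆ V2 :=
  fun _ => h.mem_right_of_adj hx

theorem IsBipartition.setOf_adj_to_subset (h : IsBipartition A V1 V2) (hx : x ∈ V1) :
    {y | A y x} ⊆ V2 :=
  fun _ => h.mem_left_of_adj hx

theorem IsBipartition.outNbhd_subset (h : IsBipartition A V1 V2) {S : Set V} (hS : S ⊆ V1) :
    outNbhd A S ⊆ V2 := by
  rintro y ⟨x, hx, hxy⟩
  exact h.mem_right_of_adj (hS hx) hxy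

theorem IsBipartition.finite (h : IsBipartition A V1 V2) : Finite V :=
  Set.finite_univ_iff.mp <| (V1.finite_toSet.union V2.finite_toSet).subset fun v _ => h.1 v

theorem IsBipartition.nat_card_eq (h : IsBipartition A V1 V2) :
    Nat.card V = V1.card + V2.card := by
  classical
  rw [← Set.ncard_univ, ← Finset.card_union_of_disjoint h.2.1, ← ncard_coe_finset]
  congr
  ext v
  simpa using h.1 v

end Bipartition

section Strong

theorem IsStrong.exists_adj [Nontrivial V] (h : IsStrong A) (x : V) : ∃ y, A x y := by
  obtain ⟨y, hxy⟩ := exists_ne x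
  rcases (h x y).cases_head with rfl | ⟨z, hz, -⟩
  exacts [absurd rfl hxy, ⟨z, hz⟩]

theorem IsStrong.exists_adj_to [Nontrivial V] (h : IsStrong A) (y : V) : ∃ x, A x y := by
  obtain ⟨x, hxy⟩ := exists_ne y
  rcases (h x y).cases_tail with rfl | ⟨z, -, hz⟩
  exacts [absurd rfl hxy, ⟨z, hz⟩]

theorem IsStrong.exists_adj_of_mem_of_notMem (h : IsStrong A) {C : Set V} {x y : V} (hx : x ∈ C)
    (hy : y ∉ C) : ∃ p ∈ C, ∃ q ∉ C, A p q := by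
  by_contra! hC
  induction h x y with
  | refl => exact hy hx
  | tail _ hbc ih => exact hC _ (by_contra ih) _ hy hbc

theorem IsStrong.exists_adj_notMem_of_outNbhd_subset (h : IsStrong A) {S : Set V} {t z : V}
    (hS : outNbhd A S ⊆ {t}) (hz : z ∉ insert t S) : ∃ q ∉ insert t S, A t q := by
  obtain ⟨p, hp, q, hq, hpq⟩ := h.exists_adj_of_mem_of_notMem (mem_insert t S) hz
  rcases hp with rfl | hp
  · exact ⟨q, hq, hpq⟩
  · exact absurd (Or.inl (hS ⟨p, hp, hpq⟩)) hq

end Strong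

section Matching

variable [Finite V] {S T : Finset V}

theorem isPerfectMatchingFromTo_of_forall_ncard_le (hST : ∀ x ∈ S, ∀ y, A x y → y ∈ T)
    (hall : ∀ U ⊆ (S : Set V), U.ncard ≤ (outNbhd A U).ncard) :
    IsPerfectMatchingFromTo A S T := by
  classical
  have := Fintype.ofFinite V
  obtain ⟨f, hf, hfA⟩ := (Fintype.all_card_le_filter_rel_iff_exists_injective
    fun (x : S) (y : V) => A x y).mp fun U => by
      have := hall (Subtype.val '' (U : Set S)) (by rintro _ ⟨x, -, rfl⟩; exact x.2)
      rw [ncard_image_of_injective _ Subtype.val_injective, ncard_coe_finset] at this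
      convert this using 1
      rw [← ncard_coe_finset]
      congr 1
      ext y
      simp [outNbhd]
  refine ⟨fun v => if hv : v ∈ S then f ⟨v, hv⟩ else v, fun v hv w hw hvw => ?_, fun v hv => ?_⟩
  · simp only [dif_pos (Finset.mem_coe.mp hv), dif_pos (Finset.mem_coe.mp hw)] at hvw
    simpa using hf hvw
  · simp only [dif_pos hv]
    exact ⟨hST v hv _ (hfA ⟨v, hv⟩), hfA ⟨v, hv⟩⟩

theorem hasCycleFactor_of_isPerfectMatchingFromTo (hcov : ∀ v, v ∈ S ∨ v ∈ T)
    (hdisj : Disjoint S T) (hST : IsPerfectMatchingFromTo A S T)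
    (hTS : IsPerfectMatchingFromTo A T S) : HasCycleFactor A := by
  classical
  obtain ⟨f, hf, hfA⟩ := hST
  obtain ⟨g, hg, hgA⟩ := hTS
  have hT : ∀ v ∉ S, v ∈ T := fun v hv => (hcov v).resolve_left hv
  have hσ : Function.Injective ((S : Set V).piecewise f g) :=
    (injective_piecewise_iff _).mpr ⟨hf, hg.mono fun v hv => hT v hv, fun x hx y hy hxy =>
      Finset.disjoint_left.mp hdisj (hgA y (hT y hy)).1 (hxy ▸ (hfA x hx).1)⟩
  refine ⟨Equiv.ofBijective _ (Finite.injective_iff_bijective.mp hσ), fun v => ?_⟩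
  by_cases hv : v ∈ S
  · simpa [hv] using (hfA v hv).2
  · simpa [hv] using (hgA v (hT v hv)).2

end Matching

theorem exists_digraphIso_H2Adj {V1 V2 : Finset V} (hbip : IsBipartition A V1 V2)
    {x₁ x₂ x₃ y₁ y₂ y₃ : V} (hV1 : (V1 : Set V) = {x₁, x₂, x₃})
    (hV2 : (V2 : Set V) = {y₁, y₂, y₃}) (hcard : Nat.card V = 6)
    (h21 : ∀ y ∈ V2, ∀ x ∈ V1, A y x) (hx₁ : A x₁ y₁ ∧ ¬A x₁ y₂ ∧ ¬A x₁ y₃)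
    (hx₂ : A x₂ y₁ ∧ ¬A x₂ y₂ ∧ ¬A x₂ y₃) (hx₃ : A x₃ y₂ ∧ A x₃ y₃) :
    ∃ b, DigraphIso A (H2Adj b) := by
  classical
  set f : Fin 6 → V := ![x₁, x₂, x₃, y₁, y₂, y₃]
  have hsurj : Function.Surjective f := by
    intro v
    rcases hbip.1 v with hv | hv
    · rw [← Finset.mem_coe, hV1] at hv
      rcases hv with rfl | rfl | rfl
      exacts [⟨0, rfl⟩, ⟨1, rfl⟩, ⟨2, rfl⟩]
    · rw [← Finset.mem_coe, hV2] at hv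
      rcases hv with rfl | rfl | rfl
      exacts [⟨3, rfl⟩, ⟨4, rfl⟩, ⟨5, rfl⟩]
  have hf := hsurj.bijective_of_nat_card_le (by simp [hcard])
  have hmem1 : x₁ ∈ V1 ∧ x₂ ∈ V1 ∧ x₃ ∈ V1 := by simp [← Finset.mem_coe, hV1]
  have hmem2 : y₁ ∈ V2 ∧ y₂ ∈ V2 ∧ y₃ ∈ V2 := by simp [← Finset.mem_coe, hV2]
  obtain ⟨-, -, h11, h22⟩ := hbip
  refine ⟨decide (A x₃ y₁), (Equiv.ofBijective f hf).symm, fun p q => ?_⟩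
  obtain ⟨i, rfl⟩ := hsurj p
  obtain ⟨j, rfl⟩ := hsurj q
  simp only [Equiv.ofBijective_symm_apply_apply]
  fin_cases i <;> fin_cases j <;> simp [f, H2Adj, h11, h22, h21, hmem1, hmem2, hx₁, hx₂, hx₃]

section Deficient

variable [Finite V] {V1 V2 : Finset V} {a : ℕ} {S : Set V}

theorem exists_setOf_adj_to_eq_of_ncard_outNbhd_lt (hbip : IsBipartition A V1 V2)
    (hV1 : V1.card = a) (hV2 : V2.card = a) (hout : ∀ v, ∃ w, A v w) (hin : ∀ v, ∃ w, A w v)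
    (hdeg : DominatingPairDegreeCondition A a) (hS : S ⊆ V1)
    (hlt : (outNbhd A S).ncard < S.ncard) :
    S.ncard + 1 = a ∧ (outNbhd A S).ncard + 2 = a ∧
      ∃ x ∈ S, ∃ y ∈ S, x ≠ y ∧ {z | A z x} = V2 ∧ a + 1 ≤ deg A y := by
  obtain ⟨x, hx, y, hy, hxy, hdx, hdy⟩ :
      ∃ x ∈ S, ∃ y ∈ S, x ≠ y ∧ 2 * a - 2 ≤ deg A x ∧ a + 1 ≤ deg A y := by
    obtain ⟨x, hx, y, hy, hxy⟩ :=
      exists_dominatingPair_of_ncard_lt hout (fun _ hx _ => (setOf_adj_subset_outNbhd hx ·)) hlt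
    rcases hdeg x y hxy with h | h
    exacts [⟨x, hx, y, hy, hxy.1, h⟩, ⟨y, hy, x, hx, hxy.1.symm, h⟩]
  have hS2 : 2 ≤ S.ncard := ncard_pair hxy ▸ ncard_le_ncard (pair_subset hx hy)
  have hSa : S.ncard ≤ a := hV1 ▸ ncard_coe_finset V1 ▸ ncard_le_ncard hS
  have hSa' : S.ncard ≠ a := by
    intro h
    have hSV1 : S = V1 := eq_of_subset_of_ncard_le hS (by simp [h, hV1])
    have hV2T : (V2 : Set V) ⊆ outNbhd A S := fun w hw =>
      let ⟨z, hz⟩ := hin w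
      mem_outNbhd.mpr ⟨z, hSV1 ▸ hbip.symm.mem_left_of_adj hw hz, hz⟩
    have := ncard_le_ncard hV2T
    rw [ncard_coe_finset] at this
    omega
  have hxin := ncard_le_ncard (hbip.setOf_adj_to_subset (hS hx))
  have hxout := ncard_le_ncard (setOf_adj_subset_outNbhd (A := A) hx)
  rw [ncard_coe_finset] at hxin
  rw [deg_eq_ncard] at hdx
  refine ⟨by omega, by omega, x, hx, y, hy, hxy,
    eq_of_subset_of_ncard_le (hbip.setOf_adj_to_subset (hS hx)) ?_, hdy⟩
  rw [ncard_coe_finset]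
  omega

theorem eq_three_of_ncard_outNbhd_lt (hbip : IsBipartition A V1 V2)
    (hV1 : V1.card = a) (hV2 : V2.card = a) (hout : ∀ v, ∃ w, A v w) (hin : ∀ v, ∃ w, A w v)
    (hdeg : DominatingPairDegreeCondition A a) (hS : S ⊆ V1)
    (hlt : (outNbhd A S).ncard < S.ncard) :
    a = 3 ∧ ∀ w ∈ (V2 : Set V) \ outNbhd A S,
      {z | A w z} = V1 ∧ {z | A z w} = (V1 : Set V) \ S := by
  obtain ⟨hSa, hTa, x, hx, y, hy, hxy, hinx, -⟩ :=
    exists_setOf_adj_to_eq_of_ncard_outNbhd_lt hbip hV1 hV2 hout hin hdeg hS hlt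
  have hS2 : 2 ≤ S.ncard := ncard_pair hxy ▸ ncard_le_ncard (pair_subset hx hy)
  set W := (V2 : Set V) \ outNbhd A S
  have hW : W.ncard = 2 := by
    rw [ncard_sdiff (hbip.outNbhd_subset hS), ncard_coe_finset]
    omega
  have hU : ((V1 : Set V) \ S).ncard = 1 := by
    rw [ncard_sdiff hS, ncard_coe_finset]
    omega
  have hWin : ∀ w ∈ W, {z | A z w} ⊆ (V1 : Set V) \ S := fun w hw z hz =>
    ⟨hbip.symm.mem_left_of_adj hw.1 hz, fun hzS => hw.2 ⟨z, hzS, hz⟩⟩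
  have hWout : ∀ w ∈ W, {z | A w z}.ncard ≤ a := fun w hw =>
    hV1 ▸ ncard_coe_finset V1 ▸ ncard_le_ncard (hbip.symm.setOf_adj_subset hw.1)
  -- Any two vertices of `W` dominate `x` and have in-degree at most `1`.
  have hdegW : ∀ w ∈ W, a = 3 ∧ 4 ≤ deg A w := by
    intro w hw
    obtain ⟨w', hw', hww'⟩ := exists_ne_of_one_lt_ncard (by omega : 1 < W.ncard) w
    have hdom : DominatingPair A w w' :=
      ⟨hww'.symm, x, hinx.superset hw.1, hinx.superset hw'.1⟩
    have hw_le := ncard_le_ncard (hWin w hw)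
    have hw'_le := ncard_le_ncard (hWin w' hw')
    have := hWout w hw
    have := hWout w' hw'
    rcases hdeg w w' hdom with h | h <;> rw [deg_eq_ncard, deg_eq_ncard] at h <;>
      rw [deg_eq_ncard] <;> omega
  obtain ⟨w, hw⟩ : W.Nonempty := nonempty_of_ncard_ne_zero (by omega)
  obtain ⟨rfl, -⟩ := hdegW w hw
  refine ⟨rfl, fun w hw => ?_⟩
  have hdw := (hdegW w hw).2
  have hin_le := ncard_le_ncard (hWin w hw)
  have := hWout w hw
  rw [deg_eq_ncard] at hdw
  refine ⟨eq_of_subset_of_ncard_le (hbip.symm.setOf_adj_subset hw.1) ?_,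
    eq_of_subset_of_ncard_le (hWin w hw) (by omega)⟩
  rw [ncard_coe_finset]
  omega

theorem setOf_adj_to_eq_of_ncard_outNbhd_lt [Nontrivial V] (hbip : IsBipartition A V1 V2)
    (hV1 : V1.card = a) (hV2 : V2.card = a) (hstrong : IsStrong A)
    (hdeg : DominatingPairDegreeCondition A a) (hS : S ⊆ V1)
    (hlt : (outNbhd A S).ncard < S.ncard) : ∀ z ∈ V1, {w | A w z} = V2 := by
  have hout := hstrong.exists_adj
  have hin := hstrong.exists_adj_to
  obtain ⟨hSa, hTa, x, hx, y, hy, hxy, hinx, hdy⟩ :=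
    exists_setOf_adj_to_eq_of_ncard_outNbhd_lt hbip hV1 hV2 hout hin hdeg hS hlt
  obtain ⟨rfl, hW⟩ := eq_three_of_ncard_outNbhd_lt hbip hV1 hV2 hout hin hdeg hS hlt
  obtain ⟨t, hT⟩ := ncard_eq_one.mp (by omega : (outNbhd A S).ncard = 1)
  intro z hz
  by_cases hzS : z ∈ S
  · have hSxy : S = {x, y} :=
      (eq_of_subset_of_ncard_le (pair_subset hx hy) (by rw [ncard_pair hxy]; omega)).symm
    rw [hSxy] at hzS
    rcases hzS with rfl | rfl
    · exact hinx
    · have hout_le : {w | A z w}.ncard ≤ 1 :=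
        ncard_singleton t ▸ ncard_le_ncard (hT ▸ setOf_adj_subset_outNbhd hy)
      rw [deg_eq_ncard] at hdy
      refine eq_of_subset_of_ncard_le (hbip.setOf_adj_to_subset hz) ?_
      rw [ncard_coe_finset]
      omega
  refine (hbip.setOf_adj_to_subset hz).antisymm fun w hw => ?_
  by_cases hwT : w ∈ outNbhd A S
  · rw [hT, mem_singleton_iff] at hwT
    subst hwT
    have hz' : z ∉ insert w S := by
      rintro (rfl | h)
      exacts [hbip.notMem_right hz hw, hzS h]
    obtain ⟨q, hq, hwq⟩ := hstrong.exists_adj_notMem_of_outNbhd_subset hT.subset hz'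
    have hU : ((V1 : Set V) \ S).ncard ≤ 1 := by
      rw [ncard_sdiff hS, ncard_coe_finset]
      omega
    have hzq : z = q := (ncard_le_one_iff).mp hU ⟨hz, hzS⟩
      ⟨hbip.symm.mem_right_of_adj hw hwq, fun h => hq (Or.inr h)⟩
    exact hzq ▸ hwq
  · exact (hW w ⟨hw, hwT⟩).1.superset hz

theorem ncard_le_ncard_outNbhd [Nontrivial V] (hbip : IsBipartition A V1 V2)
    (hV1 : V1.card = a) (hV2 : V2.card = a) (hstrong : IsStrong A)
    (hdeg : DominatingPairDegreeCondition A a) (hnotH2 : ∀ b, ¬DigraphIso A (H2Adj b))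
    (hS : S ⊆ V1) : S.ncard ≤ (outNbhd A S).ncard := by
  by_contra! hlt
  have h21 := setOf_adj_to_eq_of_ncard_outNbhd_lt hbip hV1 hV2 hstrong hdeg hS hlt
  have hout := hstrong.exists_adj
  have hin := hstrong.exists_adj_to
  obtain ⟨hSa, hTa, x, hx, y, hy, hxy, -, -⟩ :=
    exists_setOf_adj_to_eq_of_ncard_outNbhd_lt hbip hV1 hV2 hout hin hdeg hS hlt
  obtain ⟨rfl, hW⟩ := eq_three_of_ncard_outNbhd_lt hbip hV1 hV2 hout hin hdeg hS hlt
  set T := outNbhd A S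
  have hTV2 : T ⊆ V2 := hbip.outNbhd_subset hS
  obtain ⟨t, hT⟩ := ncard_eq_one.mp (by omega : T.ncard = 1)
  obtain ⟨u, hu⟩ := ncard_eq_one.mp (by rw [ncard_sdiff hS, ncard_coe_finset]; omega :
    ((V1 : Set V) \ S).ncard = 1)
  obtain ⟨w₁, w₂, -, hw⟩ := ncard_eq_two.mp (by rw [ncard_sdiff hTV2, ncard_coe_finset]; omega :
    ((V2 : Set V) \ T).ncard = 2)
  have hSxy : S = {x, y} :=
    (eq_of_subset_of_ncard_le (pair_subset hx hy) (by rw [ncard_pair hxy]; omega)).symm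
  have hV1eq : (V1 : Set V) = {x, y, u} := by
    rw [← union_sdiff_cancel hS, hu, hSxy, insert_union, singleton_union]
  have hV2eq : (V2 : Set V) = {t, w₁, w₂} := by
    rw [← union_sdiff_cancel hTV2, hw, hT, singleton_union]
  have hw₁ : w₁ ∈ (V2 : Set V) \ T := hw ▸ mem_insert _ _
  have hw₂ : w₂ ∈ (V2 : Set V) \ T := hw ▸ mem_insert_of_mem _ rfl
  have huS : u ∈ (V1 : Set V) \ S := hu ▸ rfl
  have hSt : ∀ s ∈ S, A s t := fun s hs =>
    let ⟨z, hz⟩ := hout s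
    (hT ▸ setOf_adj_subset_outNbhd hs hz : z ∈ ({t} : Set V)) ▸ hz
  obtain ⟨b, hb⟩ := exists_digraphIso_H2Adj hbip hV1eq hV2eq (by rw [hbip.nat_card_eq, hV1, hV2])
    (fun w hw z hz => (h21 z hz).superset hw)
    ⟨hSt x hx, fun h => hw₁.2 ⟨x, hx, h⟩, fun h => hw₂.2 ⟨x, hx, h⟩⟩
    ⟨hSt y hy, fun h => hw₁.2 ⟨y, hy, h⟩, fun h => hw₂.2 ⟨y, hy, h⟩⟩
    ⟨(hW w₁ hw₁).2.superset huS, (hW w₂ hw₂).2.superset huS⟩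
  exact hnotH2 b hb

theorem IsBipartition.isPerfectMatchingFromTo [Nontrivial V] (hbip : IsBipartition A V1 V2)
    (hV1 : V1.card = a) (hV2 : V2.card = a) (hstrong : IsStrong A)
    (hdeg : DominatingPairDegreeCondition A a) (hnotH2 : ∀ b, ¬DigraphIso A (H2Adj b)) :
    IsPerfectMatchingFromTo A V1 V2 :=
  isPerfectMatchingFromTo_of_forall_ncard_le (fun _ hx _ => hbip.mem_right_of_adj hx)
    fun _ hS => ncard_le_ncard_outNbhd hbip hV1 hV2 hstrong hdeg hnotH2 hS

end Deficient

end

/-- A strong balanced bipartite digraph with parts of size `a ≥ 2`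
satisfying the `B`-type degree condition on dominating pairs, and not isomorphic to
either variant of `H2`, has a perfect matching from `V1` to `V2`, a perfect matching
from `V2` to `V1`, and a cycle factor. -/
theorem stmt_3 {V : Type*} (A : V → V → Prop) (V1 V2 : Finset V) (a : ℕ)
    (ha : 2 ≤ a) (hbip : IsBipartition A V1 V2)
    (hV1 : V1.card = a) (hV2 : V2.card = a)
    (hstrong : IsStrong A)
    (hdeg : ∀ x y : V, DominatingPair A x y →
      (2 * a - 2 ≤ deg A x ∧ a + 1 ≤ deg A y) ∨
      (2 * a - 2 ≤ deg A y ∧ a + 1 ≤ deg A x))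
    (hnotH2 : ∀ b : Bool, ¬ DigraphIso A (H2Adj b)) :
    IsPerfectMatchingFromTo A V1 V2 ∧ IsPerfectMatchingFromTo A V2 V1 ∧
      HasCycleFactor A := by
  have := hbip.finite
  obtain ⟨x, -, y, -, hxy⟩ := Finset.one_lt_card.mp (by omega : 1 < V1.card)
  have : Nontrivial V := ⟨x, y, hxy⟩
  have h12 := hbip.isPerfectMatchingFromTo hV1 hV2 hstrong hdeg hnotH2
  have h21 := hbip.symm.isPerfectMatchingFromTo hV2 hV1 hstrong hdeg hnotH2
  exact ⟨h12, h21, hasCycleFactor_of_isPerfectMatchingFromTo hbip.1 hbip.2.1 h12 h21⟩
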